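/- Let x ∈ O_{C_p} with residue in F_p, and let ℓ(x) be the unique integer with 1 ≤ ℓ(x) ≤ p congruent to x modulo the maximal ideal; set x' = (x + p - ℓ(x))/p ∈ O_{C_p}. Let f : C_p\{0} → C_p be locally analytic with f(py) = f(y) for all y ≠ 0, and F(w) := ∫_{Z_p} (w+t) f(w+t) χ(w+t) dt. Then for r ≥ 1, ∑_{k=0}^{p^r-1} F((x+k)/p^r) = F(x) + ∑_{j=0}^{p^{r-1}-1} F((x'+j)/p^{r-1}). -/

import Mathlib

/-!
Write `g(u) = u f(u) χ(u)` (`truncatedIntegrand f`), so that `F(w)` is the limit of the Riemann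
sums `volkenbornSum p g n w = p^{-n} ∑_{j<p^n} g(w+j)`. Splitting `j < p^{n+r}` by its residue
mod `p^r` shows that `∑_{k<p^r} F((x+k)/p^r)` is the limit of `p^{-n} ∑_{m<p^{n+r}} g((x+m)/p^r)`.
In that sum, the terms with `p ∤ m + ℓ` have `|x+m| = 1`, so the invariance of `f` under `p`
turns them into `p^{-r} g(x+m)`; adding the vanishing terms `p^{-r} g(x+m)` with `p ∣ m + ℓ`
gives the Riemann sums of `F(x)`. The remaining terms, `m = p - ℓ + qp`, are `g((x'+q)/p^{r-1})`
and give the sum for `x'`.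
-/

open Filter Finset

lemma sum_range_mul_eq_sum_sum {M : Type*} [AddCommMonoid M] (h : ℕ → M) (a b : ℕ) :
    ∑ m ∈ range (a * b), h m = ∑ k ∈ range a, ∑ j ∈ range b, h (k + j * a) := by
  induction b with
  | zero => simp
  | succ b ih =>
    rw [Nat.mul_succ, sum_range_add, ih, ← sum_add_distrib]
    refine sum_congr rfl fun k _ => ?_
    rw [sum_range_succ, add_comm (a * b), mul_comm a]

lemma sum_range_mul_filter_dvd_add {M : Type*} [AddCommMonoid M] (h : ℕ → M) {p ℓ : ℕ}
    (hℓ1 : 1 ≤ ℓ) (hℓp : ℓ ≤ p) (N : ℕ) :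
    ∑ m ∈ range (p * N) with p ∣ m + ℓ, h m = ∑ q ∈ range N, h (p - ℓ + q * p) := by
  have hp : 0 < p := by omega
  symm
  refine sum_nbij' (fun q => p - ℓ + q * p) (fun m => m / p) ?_ ?_ ?_ ?_ fun _ _ => rfl
  · intro q hq
    simp only [mem_filter, mem_range] at hq ⊢
    have : q * p + p ≤ p * N := by nlinarith
    refine ⟨by omega, ⟨q + 1, by rw [add_right_comm, Nat.sub_add_cancel hℓp]; ring⟩⟩
  · intro m hm
    simp only [mem_filter, mem_range] at hm ⊢
    exact Nat.div_lt_of_lt_mul hm.1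
  · intro q _
    rw [Nat.add_mul_div_right _ _ hp, Nat.div_eq_of_lt (by omega), zero_add]
  · intro m hm
    simp only [mem_filter, mem_range] at hm
    have hmod : m % p + ℓ = p := by
      refine Nat.eq_of_dvd_of_lt_two_mul (by omega) ?_ (by have := Nat.mod_lt m hp; omega)
      have := Nat.mod_add_div m p
      refine (Nat.dvd_add_right (dvd_mul_right p (m / p))).mp ?_
      rw [show p * (m / p) + (m % p + ℓ) = m + ℓ by omega]
      exact hm.2
    have := Nat.mod_add_div' m p
    omega

section Ultrametric

variable {E : Type*} [SeminormedAddCommGroup E] [IsUltrametricDist E]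

lemma norm_lt_iff_of_norm_sub_lt {a b : E} {r : ℝ} (h : ‖a - b‖ < r) : ‖a‖ < r ↔ ‖b‖ < r := by
  have := IsUltrametricDist.ball_eq_of_mem (x := a) (y := b) (r := r)
    (by rwa [Metric.mem_ball, dist_eq_norm, norm_sub_rev])
  simpa [Metric.mem_ball, dist_eq_norm, norm_sub_rev] using congrArg ((0 : E) ∈ ·) this

end Ultrametric

section Field

variable {K : Type*} [Field K]

def volkenbornSum (p : ℕ) (g : K → K) (n : ℕ) (w : K) : K :=
  ((p : K) ^ n)⁻¹ * ∑ j ∈ range (p ^ n), g (w + j)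

lemma sum_volkenbornSum_div_pow {p : ℕ} (hp : (p : K) ≠ 0) (g : K → K) (w : K) (s n : ℕ) :
    ∑ k ∈ range (p ^ s), volkenbornSum p g n ((w + k) / p ^ s) =
      (p : K) ^ s * volkenbornSum p (fun u => g (u / p ^ s)) (n + s) w := by
  have hscale : (p : K) ^ s * ((p : K) ^ (n + s))⁻¹ = ((p : K) ^ n)⁻¹ := by
    rw [pow_add]; field_simp
  simp only [volkenbornSum, ← mul_sum]
  rw [← mul_assoc, hscale, pow_add p, mul_comm (p ^ n), sum_range_mul_eq_sum_sum]
  congr! 4 with k _ j _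
  push_cast
  field_simp
  ring

lemma tendsto_volkenbornSum_div_pow [TopologicalSpace K] [ContinuousAdd K] {p : ℕ}
    (hp : (p : K) ≠ 0) {g F : K → K}
    (hF : ∀ w, Tendsto (fun n => volkenbornSum p g n w) atTop (nhds (F w))) (w : K) (s : ℕ) :
    Tendsto (fun n => (p : K) ^ s * volkenbornSum p (fun u => g (u / p ^ s)) (n + s) w) atTop
      (nhds (∑ k ∈ range (p ^ s), F ((w + k) / p ^ s))) :=
  (tendsto_finsetSum _ fun _ _ => hF _).congr fun n => sum_volkenbornSum_div_pow hp g w s n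

lemma apply_div_pow_eq {f : K → K} {c : K} (hc : c ≠ 0) (hf : ∀ y ≠ 0, f (c * y) = f y)
    (s : ℕ) {y : K} (hy : y ≠ 0) : f (y / c ^ s) = f y := by
  induction s with
  | zero => simp
  | succ s ih =>
    have hsucc : y / c ^ s = c * (y / c ^ (s + 1)) := by field_simp; ring
    rw [← ih, hsucc, hf _ (div_ne_zero hy (pow_ne_zero _ hc))]

end Field

section NormedField

variable {K : Type*} [NormedField K]

noncomputable def truncatedIntegrand (f : K → K) (u : K) : K :=
  u * f u * if 1 ≤ ‖u‖ then 1 else 0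

lemma truncatedIntegrand_of_norm_lt_one (f : K → K) {u : K} (hu : ‖u‖ < 1) :
    truncatedIntegrand f u = 0 := by
  simp [truncatedIntegrand, hu.not_ge]

lemma truncatedIntegrand_div {f : K → K} {c u : K} (hc0 : c ≠ 0) (hc : ‖c‖ ≤ 1)
    (hu : 1 ≤ ‖u‖) (hf : f (u / c) = f u) :
    truncatedIntegrand f (u / c) = c⁻¹ * truncatedIntegrand f u := by
  have hle : ‖u‖ ≤ ‖u / c‖ := by
    rw [norm_div]; exact le_div_self (norm_nonneg u) (norm_pos_iff.mpr hc0) hc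
  rw [truncatedIntegrand, truncatedIntegrand, hf, if_pos hu, if_pos (hu.trans hle)]
  ring

variable {p : ℕ} [Fact p.Prime] [Algebra ℚ_[p] K]

lemma natCast_ne_zero_of_norm_algebraMap (hiso : ∀ q : ℚ_[p], ‖algebraMap ℚ_[p] K q‖ = ‖q‖) :
    (p : K) ≠ 0 := by
  rw [← norm_ne_zero_iff, ← map_natCast (algebraMap ℚ_[p] K), hiso, Padic.norm_p]
  exact inv_ne_zero (Nat.cast_ne_zero.mpr (Fact.out : p.Prime).ne_zero)

variable [IsUltrametricDist K]

lemma norm_add_natCast_lt_one_iff (hiso : ∀ q : ℚ_[p], ‖algebraMap ℚ_[p] K q‖ = ‖q‖)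
    {x : K} {ℓ : ℕ} (hres : ‖x - ℓ‖ < 1) (m : ℕ) : ‖x + m‖ < 1 ↔ p ∣ m + ℓ := by
  have hsub : x + m - ((m + ℓ : ℕ) : K) = x - ℓ := by push_cast; ring
  rw [norm_lt_iff_of_norm_sub_lt (hsub ▸ hres), ← map_natCast (algebraMap ℚ_[p] K), hiso,
    Padic.norm_natCast_lt_one_iff]

lemma sum_truncatedIntegrand_div_pow_succ (hiso : ∀ q : ℚ_[p], ‖algebraMap ℚ_[p] K q‖ = ‖q‖)
    {x : K} {ℓ : ℕ} (hℓ1 : 1 ≤ ℓ) (hℓp : ℓ ≤ p) (hres : ‖x - ℓ‖ < 1) {f : K → K}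
    (hfp : ∀ y ≠ 0, f (p * y) = f y) (s N : ℕ) :
    ∑ m ∈ range (p * N), truncatedIntegrand f ((x + m) / (p : K) ^ (s + 1)) =
      ((p : K) ^ (s + 1))⁻¹ * ∑ m ∈ range (p * N), truncatedIntegrand f (x + m) +
        ∑ q ∈ range N, truncatedIntegrand f (((x + p - ℓ) / p + q) / (p : K) ^ s) := by
  have hp := natCast_ne_zero_of_norm_algebraMap hiso
  have hterm (m : ℕ) : truncatedIntegrand f ((x + m) / (p : K) ^ (s + 1)) =
      ((p : K) ^ (s + 1))⁻¹ * truncatedIntegrand f (x + m) +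
        if p ∣ m + ℓ then truncatedIntegrand f ((x + m) / (p : K) ^ (s + 1)) else 0 := by
    by_cases hdvd : p ∣ m + ℓ
    · rw [if_pos hdvd, truncatedIntegrand_of_norm_lt_one f
        ((norm_add_natCast_lt_one_iff hiso hres m).mpr hdvd), mul_zero, zero_add]
    · have hu : 1 ≤ ‖x + m‖ := not_lt.mp (mt (norm_add_natCast_lt_one_iff hiso hres m).mp hdvd)
      rw [if_neg hdvd, add_zero]
      refine truncatedIntegrand_div (pow_ne_zero _ hp) ?_ hu
        (apply_div_pow_eq hp hfp _ (norm_pos_iff.mp (one_pos.trans_le hu)))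
      rw [norm_pow]
      exact pow_le_one₀ (norm_nonneg _) (IsUltrametricDist.norm_natCast_le_one K p)
  rw [sum_congr rfl fun m _ => hterm m, sum_add_distrib, ← mul_sum, ← sum_filter,
    sum_range_mul_filter_dvd_add _ hℓ1 hℓp]
  congr! 3 with q
  push_cast [Nat.cast_sub hℓp]
  field_simp
  ring

lemma volkenbornSum_truncatedIntegrand_div_pow_succ
    (hiso : ∀ q : ℚ_[p], ‖algebraMap ℚ_[p] K q‖ = ‖q‖)
    {x : K} {ℓ : ℕ} (hℓ1 : 1 ≤ ℓ) (hℓp : ℓ ≤ p) (hres : ‖x - ℓ‖ < 1) {f : K → K}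
    (hfp : ∀ y ≠ 0, f (p * y) = f y) (s n : ℕ) :
    (p : K) ^ (s + 1) *
        volkenbornSum p (fun u => truncatedIntegrand f (u / p ^ (s + 1))) (n + (s + 1)) x =
      volkenbornSum p (truncatedIntegrand f) (n + (s + 1)) x +
        (p : K) ^ s * volkenbornSum p (fun u => truncatedIntegrand f (u / p ^ s)) (n + s)
          ((x + p - ℓ) / p) := by
  have hp := natCast_ne_zero_of_norm_algebraMap hiso
  simp only [volkenbornSum]
  rw [show p ^ (n + (s + 1)) = p * p ^ (n + s) by ring,
    sum_truncatedIntegrand_div_pow_succ hiso hℓ1 hℓp hres hfp]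
  field_simp
  ring

end NormedField

theorem F_sum_over_pr_of_residue_in_Fp_general (p : ℕ) [Fact p.Prime] (K : Type*)
    [NontriviallyNormedField K] [IsUltrametricDist K]
    [Algebra ℚ_[p] K] (hiso : ∀ q : ℚ_[p], ‖algebraMap ℚ_[p] K q‖ = ‖q‖)
    (x : K)
    (ℓ : ℕ) (hℓ1 : 1 ≤ ℓ) (hℓp : ℓ ≤ p) (hres : ‖x - (ℓ : K)‖ < 1)
    (f : K → K)
    (hfp : ∀ y : K, y ≠ 0 → f ((p : K) * y) = f y)
    (F : K → K)
    (hF : ∀ w : K,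
      Tendsto (fun n : ℕ => ((p : K) ^ n)⁻¹ * ∑ j ∈ Finset.range (p ^ n),
          ((w + (j : K)) * f (w + (j : K)) * (if 1 ≤ ‖w + (j : K)‖ then (1 : K) else 0)))
        atTop (nhds (F w)))
    (r : ℕ) (hr : 1 ≤ r) :
    ∑ k ∈ Finset.range (p ^ r), F ((x + (k : K)) / (p : K) ^ r) =
      F x + ∑ j ∈ Finset.range (p ^ (r - 1)),
        F (((x + (p : K) - (ℓ : K)) / (p : K) + (j : K)) / (p : K) ^ (r - 1)) := by
  obtain ⟨s, rfl⟩ : ∃ s, r = s + 1 := ⟨r - 1, by omega⟩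
  rw [Nat.add_sub_cancel]
  have hp := natCast_ne_zero_of_norm_algebraMap hiso
  have hV : ∀ w, Tendsto (fun n => volkenbornSum p (truncatedIntegrand f) n w) atTop
      (nhds (F w)) := hF
  refine tendsto_nhds_unique (tendsto_volkenbornSum_div_pow hp hV x (s + 1)) ?_
  refine (((hV x).comp (tendsto_add_atTop_nat (s + 1))).add
    (tendsto_volkenbornSum_div_pow hp hV _ s)).congr fun n => ?_
  exact (volkenbornSum_truncatedIntegrand_div_pow_succ hiso hℓ1 hℓp hres hfp s n).symm

/-- Let `x ∈ O_{ℂ_p}` with residue in `F_p`, witnessed by the unique `1 ≤ ℓ ≤ p` with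
`‖x - ℓ‖ < 1`, and set `x' = (x + p - ℓ)/p`.  For `f` locally analytic on `ℂ_p \ {0}`
with `f(py) = f(y)` and `F(w) = ∫_{ℤ_p} (w+t) f(w+t) χ(w+t) dt`, one has for `r ≥ 1`:
`∑_{k<p^r} F((x+k)/p^r) = F(x) + ∑_{j<p^{r-1}} F((x'+j)/p^{r-1})`. -/
theorem F_sum_over_pr_of_residue_in_Fp (p : ℕ) [Fact p.Prime] (K : Type*)
    [NontriviallyNormedField K] [CompleteSpace K] [IsAlgClosed K] [IsUltrametricDist K]
    [Algebra ℚ_[p] K] (hiso : ∀ q : ℚ_[p], ‖algebraMap ℚ_[p] K q‖ = ‖q‖)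
    (x : K) (hx : ‖x‖ ≤ 1)
    (ℓ : ℕ) (hℓ1 : 1 ≤ ℓ) (hℓp : ℓ ≤ p) (hres : ‖x - (ℓ : K)‖ < 1)
    (f : K → K) (hfan : ∀ y : K, y ≠ 0 → AnalyticAt K f y)
    (hfp : ∀ y : K, y ≠ 0 → f ((p : K) * y) = f y)
    (F : K → K)
    (hF : ∀ w : K,
      Tendsto (fun n : ℕ => ((p : K) ^ n)⁻¹ * ∑ j ∈ Finset.range (p ^ n),
          ((w + (j : K)) * f (w + (j : K)) * (if 1 ≤ ‖w + (j : K)‖ then (1 : K) else 0)))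
        atTop (nhds (F w)))
    (r : ℕ) (hr : 1 ≤ r) :
    ∑ k ∈ Finset.range (p ^ r), F ((x + (k : K)) / (p : K) ^ r) =
      F x + ∑ j ∈ Finset.range (p ^ (r - 1)),
        F (((x + (p : K) - (ℓ : K)) / (p : K) + (j : K)) / (p : K) ^ (r - 1)) :=
  F_sum_over_pr_of_residue_in_Fp_general p K hiso x ℓ hℓ1 hℓp hres f hfp F hF r hr
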